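/- Marginalization over the segment containing a fixed data point: for any function a : ℕ × ℕ → ℝ, integers n ≥ 1, k ≥ 1, and any t with 1 ≤ t ≤ n, one has Σ_{m=1}^{k} Σ_{0 ≤ i < t} Σ_{t ≤ j ≤ n} S_{m-1}(0, i) · a(i, j) · S_{k-m}(j, n) = S_k(0, n). (In every segmentation into k segments, the data point t lies in exactly one segment m with boundaries i = t_{m-1} < t ≤ t_m = j; summing the factorized contributions over all possible (m, i, j) recovers the total sum over all segmentations. This identity underlies the efficient computation of the Bayesian regression curve.) -/

import Mathlib

open Finset in
open scoped Classical in
/-- `S a k i j` is the sum, over all integer tuples `(t 0, ..., t k)` with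
`i = t 0 < t 1 < ... < t k = j`, of the product `∏_{q=1}^k a (t (q-1), t q)`.
In Bayesian piecewise constant regression it is the total (unnormalized) evidence of the
data points `y_{i+1}, ..., y_j` segmented into `k` segments, where `a (i, j)` is the
single-segment evidence of `y_{i+1}, ..., y_j`. -/
noncomputable def S (a : ℕ × ℕ → ℝ) (k i j : ℕ) : ℝ :=
  ∑ t ∈ Finset.univ.filter (fun t : Fin (k + 1) → Fin (j + 1) =>
      StrictMono t ∧ (t 0 : ℕ) = i ∧ (t (Fin.last k) : ℕ) = j),
    ∏ q : Fin k, a ((t q.castSucc : ℕ), (t q.succ : ℕ))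

/-!
Peeling off the last segment gives `S a (k + 1) s n = ∑_{s ≤ l < n} S a k s l * a (l, n)`.
Induct on `k` and split this sum at `t`: for `l < t` the last segment `(l, n]` is the one
containing `t`, while for `t ≤ l` the induction hypothesis at the endpoint `l` accounts for the
segmentations whose segment containing `t` is an earlier one.
-/

open Finset

theorem Fin.strictMono_snoc_iff {α : Type*} [Preorder α] {n : ℕ} {p : Fin (n + 1) → α}
    {x : α} :
    StrictMono (Fin.snoc p x : Fin (n + 2) → α) ↔ StrictMono p ∧ p (Fin.last n) < x := by
  simp only [Fin.strictMono_iff_lt_succ (f := Fin.snoc p x), Fin.forall_fin_succ',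
    Fin.succ_castSucc, Fin.snoc_castSucc, Fin.succ_last, Fin.snoc_last,
    ← Fin.strictMono_iff_lt_succ]

section Segmentations

variable (a : ℕ × ℕ → ℝ)

open scoped Classical in
/-- `S a k i j` with the tuples valued in `Fin (N + 1)` rather than `Fin (j + 1)`: at a fixed `N`,
splitting off the last point of a tuple is a plain `Fin.init` / `Fin.snoc`. -/
noncomputable def chainSum (N k i j : ℕ) : ℝ :=
  ∑ t ∈ Finset.univ.filter (fun t : Fin (k + 1) → Fin (N + 1) =>
      StrictMono t ∧ (t 0 : ℕ) = i ∧ (t (Fin.last k) : ℕ) = j),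
    ∏ q : Fin k, a ((t q.castSucc : ℕ), (t q.succ : ℕ))

theorem S_eq_chainSum {k i j N : ℕ} (hj : j ≤ N) : S a k i j = chainSum a N k i j := by
  have hle : j + 1 ≤ N + 1 := by omega
  refine sum_bij (fun t _ => Fin.castLE hle ∘ t) ?_ ?_ ?_ ?_
  · intro t ht
    simp only [mem_filter, mem_univ, true_and] at ht ⊢
    exact ⟨(Fin.strictMono_castLE hle).comp ht.1, ht.2⟩
  · intro t _ t' _ h
    funext q
    exact Fin.castLE_injective hle (congrFun h q)
  · intro t ht
    simp only [mem_filter, mem_univ, true_and] at ht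
    have hbound : ∀ q, (t q : ℕ) < j + 1 := fun q => by
      have hqj := ht.1.monotone (Fin.le_last q)
      rw [Fin.le_def, ht.2.2] at hqj
      omega
    refine ⟨fun q => ⟨t q, hbound q⟩, ?_, rfl⟩
    simp only [mem_filter, mem_univ, true_and]
    exact ⟨fun q q' h => ht.1 h, ht.2⟩
  · intro t _
    rfl

theorem chainSum_succ {N k i j : ℕ} (hj : j ≤ N) :
    chainSum a N (k + 1) i j = ∑ l ∈ Ico i j, chainSum a N k i l * a (l, j) := by
  set P := univ.filter (fun p : Fin (k + 1) → Fin (N + 1) =>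
    StrictMono p ∧ (p 0 : ℕ) = i ∧ (p (Fin.last k) : ℕ) < j)
  set w := fun p : Fin (k + 1) → Fin (N + 1) =>
    (∏ q : Fin k, a ((p q.castSucc : ℕ), (p q.succ : ℕ))) * a ((p (Fin.last k) : ℕ), j)
  have split_last : chainSum a N (k + 1) i j = ∑ p ∈ P, w p := by
    refine sum_nbij' Fin.init (fun p => Fin.snoc p ⟨j, by omega⟩) ?_ ?_ ?_ ?_ ?_
    · intro t ht
      simp only [mem_filter, mem_univ, true_and, P] at ht ⊢
      obtain ⟨hmono, h0, hlast⟩ := ht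
      rw [← Fin.snoc_init_self t, Fin.strictMono_snoc_iff] at hmono
      exact ⟨hmono.1, h0, hlast ▸ hmono.2⟩
    · intro p hp
      simp only [mem_filter, mem_univ, true_and, P] at hp ⊢
      refine ⟨Fin.strictMono_snoc_iff.2 ⟨hp.1, hp.2.2⟩, ?_, by simp⟩
      rw [← Fin.castSucc_zero, Fin.snoc_castSucc]
      exact hp.2.1
    · intro t ht
      simp only [mem_filter, mem_univ, true_and] at ht
      conv_rhs => rw [← Fin.snoc_init_self t]
      exact congrArg _ (Fin.ext ht.2.2.symm)
    · intro p _
      exact Fin.init_snoc _ _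
    · intro t ht
      simp only [mem_filter, mem_univ, true_and] at ht
      simp only [w, Fin.prod_univ_castSucc, Fin.init, Fin.succ_castSucc, Fin.succ_last, ht.2.2]
  have fibre : ∀ l ∈ Ico i j, chainSum a N k i l * a (l, j)
      = ∑ p ∈ P with (p (Fin.last k) : ℕ) = l, w p := by
    intro l hl
    rw [chainSum, sum_mul, filter_filter]
    refine sum_congr (filter_congr fun p _ => ?_) fun p hp => ?_
    · have hlj := (mem_Ico.1 hl).2
      constructor
      · rintro ⟨hmono, h0, rfl⟩
        exact ⟨⟨hmono, h0, hlj⟩, rfl⟩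
      · rintro ⟨⟨hmono, h0, -⟩, rfl⟩
        exact ⟨hmono, h0, rfl⟩
    · simp only [mem_filter] at hp
      simp only [w, hp.2.2]
  rw [sum_congr rfl fibre, sum_fiberwise_of_maps_to, split_last]
  intro p hp
  simp only [mem_filter, mem_univ, true_and, P] at hp
  have hil := hp.1.monotone (Fin.zero_le (Fin.last k))
  rw [Fin.le_def, hp.2.1] at hil
  exact mem_Ico.2 ⟨hil, hp.2.2⟩

theorem S_succ (k i j : ℕ) : S a (k + 1) i j = ∑ l ∈ Ico i j, S a k i l * a (l, j) := by
  rw [S_eq_chainSum a le_rfl, chainSum_succ a le_rfl]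
  exact sum_congr rfl fun l hl => by rw [S_eq_chainSum a (mem_Ico.1 hl).2.le]

theorem S_zero (i j : ℕ) : S a 0 i j = if i = j then 1 else 0 := by
  simp only [S, Fin.prod_univ_zero, sum_const, nsmul_eq_mul, mul_one]
  split_ifs with hij
  · subst hij
    rw [Nat.cast_eq_one]
    refine card_eq_one.2 ⟨fun _ : Fin 1 => Fin.last i, eq_singleton_iff_unique_mem.2
      ⟨by simp [Subsingleton.strictMono], ?_⟩⟩
    intro t ht
    simp only [mem_filter] at ht
    funext q
    rw [Fin.fin_one_eq_zero q]
    exact Fin.ext ht.2.2.1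
  · rw [Nat.cast_eq_zero]
    refine card_eq_zero.2 (filter_eq_empty_iff.2 fun t _ ⟨_, h0, hlast⟩ => hij ?_)
    exact h0.symm.trans hlast

theorem sum_mul_S_zero (c : ℕ → ℝ) {t n : ℕ} (htn : t ≤ n) :
    ∑ j ∈ Icc t n, c j * S a 0 j n = c n := by
  simp only [S_zero, mul_ite, mul_one, mul_zero, sum_ite_eq', mem_Icc, htn, le_refl, and_self,
    if_true]

theorem sum_mul_S_succ (c : ℕ → ℝ) (q t n : ℕ) :
    ∑ j ∈ Icc t n, c j * S a (q + 1) j n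
      = ∑ l ∈ Ico t n, (∑ j ∈ Icc t l, c j * S a q j l) * a (l, n) := by
  simp only [S_succ, mul_sum, sum_mul, mul_assoc]
  exact sum_comm' fun j l => by simp only [mem_Icc, mem_Ico]; omega

theorem sum_covering_segment_eq_S (k : ℕ) {s t n : ℕ} (hst : s < t) (htn : t ≤ n) :
    ∑ m ∈ Icc 1 k, ∑ i ∈ Ico s t, ∑ j ∈ Icc t n,
      S a (m - 1) s i * a (i, j) * S a (k - m) j n = S a k s n := by
  induction k generalizing n with
  | zero => simp [S_zero, (hst.trans_le htn).ne]
  | succ k ih =>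
    have last_covers : ∑ i ∈ Ico s t, ∑ j ∈ Icc t n, S a k s i * a (i, j) * S a 0 j n
        = ∑ i ∈ Ico s t, S a k s i * a (i, n) :=
      sum_congr rfl fun i _ => sum_mul_S_zero a _ htn
    have peel_last : ∀ m ∈ Icc 1 k,
        ∑ i ∈ Ico s t, ∑ j ∈ Icc t n, S a (m - 1) s i * a (i, j) * S a (k + 1 - m) j n
          = ∑ l ∈ Ico t n, (∑ i ∈ Ico s t, ∑ j ∈ Icc t l,
              S a (m - 1) s i * a (i, j) * S a (k - m) j l) * a (l, n) := by
      intro m hm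
      rw [show k + 1 - m = k - m + 1 by simp only [mem_Icc] at hm; omega]
      simp only [sum_mul_S_succ, sum_mul]
      exact sum_comm
    calc _ = ∑ m ∈ Icc 1 k, ∑ i ∈ Ico s t, ∑ j ∈ Icc t n,
            S a (m - 1) s i * a (i, j) * S a (k + 1 - m) j n
          + ∑ i ∈ Ico s t, ∑ j ∈ Icc t n, S a k s i * a (i, j) * S a 0 j n := by
          rw [sum_Icc_succ_top (by omega), Nat.add_sub_cancel, Nat.sub_self]
      _ = ∑ l ∈ Ico t n, S a k s l * a (l, n) + ∑ i ∈ Ico s t, S a k s i * a (i, n) := by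
          rw [sum_congr rfl peel_last, sum_comm, last_covers]
          congr 1
          refine sum_congr rfl fun l hl => ?_
          rw [← sum_mul, ih (mem_Ico.1 hl).1]
      _ = S a (k + 1) s n := by
          rw [S_succ, add_comm, sum_Ico_consecutive _ hst.le htn]

end Segmentations

theorem marginalization_over_segment_general (a : ℕ × ℕ → ℝ) (n k t : ℕ)
    (ht1 : 1 ≤ t) (htn : t ≤ n) :
    ∑ m ∈ Finset.Icc 1 k, ∑ i ∈ Finset.range t, ∑ j ∈ Finset.Icc t n,
      S a (m - 1) 0 i * a (i, j) * S a (k - m) j n = S a k 0 n := by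
  rw [range_eq_Ico]
  exact sum_covering_segment_eq_S a k ht1 htn

/-- Marginalization over the segment containing a fixed data point `t`:
`∑_{m=1}^k ∑_{0 ≤ i < t} ∑_{t ≤ j ≤ n} S (m-1) (0, i) * a (i, j) * S (k-m) (j, n) = S k (0, n)`. -/
theorem marginalization_over_segment (a : ℕ × ℕ → ℝ) (n k t : ℕ)
    (hn : 1 ≤ n) (hk : 1 ≤ k) (ht1 : 1 ≤ t) (htn : t ≤ n) :
    ∑ m ∈ Finset.Icc 1 k, ∑ i ∈ Finset.range t, ∑ j ∈ Finset.Icc t n,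
      S a (m - 1) 0 i * a (i, j) * S a (k - m) j n = S a k 0 n :=
  marginalization_over_segment_general a n k t ht1 htn
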